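/- Let k be a field of characteristic 0 and let 𝔨 be a Lie subalgebra of the Witt algebra W = k[t,t⁻¹]∂ (with bracket [f∂, g∂] = (fg'−f'g)∂). Suppose f, g ∈ k[t,t⁻¹] are such that 𝔨 contains f·r·∂ for all r ∈ k[t,t⁻¹], and g∂ ∈ 𝔨. Then 𝔨 contains g·f'·r·∂ for all r ∈ k[t,t⁻¹]. -/

import Mathlib

/-- Formal derivative on Laurent polynomials, sending `tⁿ` to `n·tⁿ⁻¹`. -/
noncomputable def lderiv {k : Type*} [CommRing k] (f : LaurentPolynomial k) : LaurentPolynomial k :=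
  AddMonoidAlgebra.ofCoeff (Finsupp.sum f.coeff fun n a => Finsupp.single (n - 1) ((n : k) * a))

section lderiv

open AddMonoidAlgebra

variable {k : Type*} [CommRing k]

lemma lderiv_single (n : ℤ) (a : k) :
    lderiv (single n a : LaurentPolynomial k) = single (n - 1) ((n : k) * a) :=
  congrArg ofCoeff (Finsupp.sum_single_index (by simp))

lemma lderiv_zero : lderiv (0 : LaurentPolynomial k) = 0 := by
  simp [lderiv]

lemma lderiv_add (f g : LaurentPolynomial k) : lderiv (f + g) = lderiv f + lderiv g := by
  unfold lderiv
  rw [coeff_add, ← ofCoeff_add]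
  exact congrArg ofCoeff
    (Finsupp.sum_add_index (by simp) (fun _ _ _ _ => by rw [mul_add, Finsupp.single_add]))

lemma lderiv_single_mul_single (n m : ℤ) (a b : k) :
    lderiv (single n a * single m b : LaurentPolynomial k)
      = single n a * lderiv (single m b) + lderiv (single n a) * single m b := by
  simp only [lderiv_single, single_mul_single, ← single_add,
    show n + (m - 1) = n + m - 1 by ring, show n - 1 + m = n + m - 1 by ring]
  congr 1
  push_cast
  ring

lemma lderiv_mul (f g : LaurentPolynomial k) :
    lderiv (f * g) = f * lderiv g + lderiv f * g := by
  induction f using induction_linear with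
  | zero => simp [lderiv_zero]
  | add a b ha hb => rw [add_mul, lderiv_add, ha, hb, lderiv_add]; ring
  | single n a =>
    induction g using induction_linear with
    | zero => simp [lderiv_zero]
    | add c d hc hd => rw [mul_add, lderiv_add, hc, hd, lderiv_add]; ring
    | single m b => exact lderiv_single_mul_single n m a b

/-- Solving the bracket `[f r, g] = f r g' - f' r g - f r' g` for its middle term. -/
lemma mul_lderiv_mul_eq (f g r : LaurentPolynomial k) :
    g * lderiv f * r
      = f * (r * lderiv g) - f * (lderiv r * g) - (f * r * lderiv g - lderiv (f * r) * g) := by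
  rw [lderiv_mul]
  ring

end lderiv

theorem witt_subalgebra_contains_general {k : Type*} [Field k]
    (𝔨 : Submodule k (LaurentPolynomial k))
    (hLie : ∀ a ∈ 𝔨, ∀ b ∈ 𝔨, a * lderiv b - lderiv a * b ∈ 𝔨)
    (f g : LaurentPolynomial k)
    (hf : ∀ r : LaurentPolynomial k, f * r ∈ 𝔨)
    (hg : g ∈ 𝔨) :
    ∀ r : LaurentPolynomial k, g * lderiv f * r ∈ 𝔨 := by
  intro r
  rw [mul_lderiv_mul_eq]
  exact 𝔨.sub_mem (𝔨.sub_mem (hf _) (hf _)) (hLie _ (hf r) g hg)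

/-- Let `𝔨` be a Lie subalgebra of the Witt algebra `W = k[t,t⁻¹]∂` (identified with
`k[t,t⁻¹]` with bracket `[f,g] = fg' − f'g`).  If `W(f) = f·k[t,t⁻¹] ⊆ 𝔨` and `g ∈ 𝔨`,
then `W(g·f') ⊆ 𝔨`. -/
theorem witt_subalgebra_contains {k : Type*} [Field k] [CharZero k]
    (𝔨 : Submodule k (LaurentPolynomial k))
    (hLie : ∀ a ∈ 𝔨, ∀ b ∈ 𝔨, a * lderiv b - lderiv a * b ∈ 𝔨)
    (f g : LaurentPolynomial k)
    (hf : ∀ r : LaurentPolynomial k, f * r ∈ 𝔨)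
    (hg : g ∈ 𝔨) :
    ∀ r : LaurentPolynomial k, g * lderiv f * r ∈ 𝔨 :=
  witt_subalgebra_contains_general 𝔨 hLie f g hf hg
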